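/- arXiv:2112.12909 — 3 statements merged into one kernel-verified Lean document; each statement's English description precedes it below -/
import Mathlib

section
/- Under model (1.1) with p ≥ 3 and any deterministic positive semidefinite W ∈ ℝ^{q×q}: (i) if a and b lie in the same row cluster (a ∼ b), then COD_{Σ_{p,W}}(a,b) = 0; (ii) if in addition MCOD(Σ_{p,W}) > 0, then for all a ≠ b one has a ∼ b if and only if COD_{Σ_{p,W}}(a,b) = 0, so the row partition G^{(r)} is identifiable from Σ_{p,W} up to label switching. -/
open MeasureTheory ProbabilityTheory Matrix BigOperators Finset
open scoped Classical

noncomputable section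

instance {m n : Type*} : MeasurableSpace (Matrix m n ℝ) :=
  inferInstanceAs (MeasurableSpace (m → n → ℝ))

/-- Entrywise expectation of a random matrix. -/
def matExp {Ω : Type*} [MeasurableSpace Ω] (μ : Measure Ω) {m n : ℕ}
    (X : Ω → Matrix (Fin m) (Fin n) ℝ) : Matrix (Fin m) (Fin n) ℝ :=
  Matrix.of fun i j => ∫ ω, X ω i j ∂μ

/-- A membership matrix: binary, every row has exactly one 1, every column is nonzero. -/
def IsMembership {p K : ℕ} (A : Matrix (Fin p) (Fin K) ℝ) : Prop :=
  (∀ i k, A i k = 0 ∨ A i k = 1) ∧ (∀ i, ∃! k, A i k = 1) ∧ (∀ k, ∃ i, A i k = 1)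

/-- `a` and `b` belong to the same cluster encoded by the membership matrix `A`. -/
def SameCluster {p K : ℕ} (A : Matrix (Fin p) (Fin K) ℝ) (a b : Fin p) : Prop :=
  ∃ k, A a k = 1 ∧ A b k = 1

/-- `COD_Σ(a,b) = max_{c ≠ a,b} |Σ_{ac} − Σ_{bc}|`. -/
def COD {p : ℕ} (S : Matrix (Fin p) (Fin p) ℝ) (a b : Fin p) : ℝ :=
  ⨆ c : Fin p, ⨆ _ : c ≠ a ∧ c ≠ b, |S a c - S b c|

/-- `MCOD(Σ) = min_{a ≁ b} COD_Σ(a,b)`, the minimum over pairs in different clusters. -/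
def MCOD {p : ℕ} (r : Fin p → Fin p → Prop) (S : Matrix (Fin p) (Fin p) ℝ) : ℝ :=
  ⨅ ab : {ab : Fin p × Fin p // ¬ r ab.1 ab.2}, COD S ab.1.1 ab.1.2

/-- Entrywise maximum norm `‖M‖_max = max_{i,j} |M_{ij}|`. -/
def maxNorm {p q : ℕ} (M : Matrix (Fin p) (Fin q) ℝ) : ℝ := ⨆ i, ⨆ j, |M i j|

/-- Frobenius norm. -/
def frob {m n : ℕ} (M : Matrix (Fin m) (Fin n) ℝ) : ℝ := Real.sqrt (∑ i, ∑ j, (M i j)^2)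

/-! Within a cluster the signal rows coincide, so `X_a − X_b = Γ_a − Γ_b` when `a ∼ b`. Each noise
entry `Γ_{as}` is centred and independent both of the signal `A Z Bᵀ` and of the noise in any other
row `c`, hence `E[Γ_{as} X_{ct}] = 0` for `c ≠ a`. Expanding `Σ_{ac}` as `∑ W_{st} E[X_{as} X_{ct}]`
gives `Σ_{ac} = Σ_{bc}` for every `c ∉ {a, b}`, i.e. `COD(a, b) = 0`. As `COD ≥ 0`, a positive
`MCOD` then separates the pairs in different clusters. -/

section Dissimilarity

variable {p : ℕ} (S : Matrix (Fin p) (Fin p) ℝ)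

lemma COD_nonneg (a b : Fin p) : 0 ≤ COD S a b :=
  Real.iSup_nonneg fun _ => Real.iSup_nonneg fun _ => abs_nonneg _

lemma COD_eq_zero_of_forall_apply_eq {a b : Fin p}
    (h : ∀ c, c ≠ a → c ≠ b → S a c = S b c) : COD S a b = 0 := by
  have hc : ∀ c, ⨆ _ : c ≠ a ∧ c ≠ b, |S a c - S b c| = 0 := fun c => by
    by_cases hc : c ≠ a ∧ c ≠ b
    · simp [hc, h c hc.1 hc.2]
    · simp [hc]
  simp [COD, hc]

lemma MCOD_le_COD {r : Fin p → Fin p → Prop} {a b : Fin p} (hab : ¬ r a b) :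
    MCOD r S ≤ COD S a b :=
  ciInf_le (f := fun ab : {ab : Fin p × Fin p // ¬ r ab.1 ab.2} => COD S ab.1.1 ab.1.2)
    ⟨0, by rintro _ ⟨_, rfl⟩; exact COD_nonneg S _ _⟩ ⟨(a, b), hab⟩

lemma iff_COD_eq_zero_of_MCOD_pos {r : Fin p → Fin p → Prop}
    (hr : ∀ a b, r a b → COD S a b = 0) (hM : 0 < MCOD r S) (a b : Fin p) :
    r a b ↔ COD S a b = 0 := by
  refine ⟨hr a b, fun hcod => ?_⟩
  by_contra hab
  linarith [MCOD_le_COD S hab]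

end Dissimilarity

namespace IsMembership

variable {p K : ℕ} {A : Matrix (Fin p) (Fin K) ℝ}

lemma apply_eq_ite (hA : IsMembership A) {i : Fin p} {k : Fin K} (hik : A i k = 1) (j : Fin K) :
    A i j = if j = k then 1 else 0 := by
  split_ifs with hj
  · rwa [hj]
  · exact (hA.1 i j).resolve_right fun h => hj ((hA.2.1 i).unique h hik)

lemma row_eq_of_sameCluster (hA : IsMembership A) {a b : Fin p} (hab : SameCluster A a b) :
    A a = A b := by
  obtain ⟨k, hak, hbk⟩ := hab
  funext j
  rw [hA.apply_eq_ite hak, hA.apply_eq_ite hbk]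

end IsMembership

section SecondMoments

variable {Ω : Type*} [MeasurableSpace Ω] {μ : Measure Ω}

lemma ProbabilityTheory.IndepFun.integral_mul_eq_zero {f g : Ω → ℝ} (hfg : IndepFun f g μ)
    (hf : AEStronglyMeasurable f μ) (hg : AEStronglyMeasurable g μ) (hf0 : ∫ ω, f ω ∂μ = 0) :
    ∫ ω, f ω * g ω ∂μ = 0 := by
  rw [hfg.integral_fun_mul_eq_mul_integral hf hg, hf0, zero_mul]

lemma MeasureTheory.MemLp.integrable_fun_mul {f g : Ω → ℝ} (hf : MemLp f 2 μ)
    (hg : MemLp g 2 μ) : Integrable (fun ω => f ω * g ω) μ :=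
  hf.integrable_mul hg

lemma memLp_two_of_integrable_mul_self {f : Ω → ℝ} (hf : AEStronglyMeasurable f μ)
    (hff : Integrable (fun ω => f ω * f ω) μ) : MemLp f 2 μ :=
  (memLp_two_iff_integrable_sq hf).2 (by simpa only [sq] using hff)

lemma memLp_mul_mul_apply {r : ENNReal} {m₁ m₂ n₁ n₂ : ℕ} {Z : Ω → Matrix (Fin m₂) (Fin n₁) ℝ}
    (hZ : ∀ j k, MemLp (fun ω => Z ω j k) r μ) (C : Matrix (Fin m₁) (Fin m₂) ℝ)
    (D : Matrix (Fin n₁) (Fin n₂) ℝ) (i : Fin m₁) (s : Fin n₂) :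
    MemLp (fun ω => (C * Z ω * D) i s) r μ := by
  simp only [mul_apply]
  exact memLp_finsetSum _ fun k _ =>
    (memLp_finsetSum _ fun j _ => (hZ j k).const_mul _).mul_const _

variable {p q : ℕ} {X : Ω → Matrix (Fin p) (Fin q) ℝ}

lemma matExp_mul_mul_transpose_apply (hX : ∀ i s, MemLp (fun ω => X ω i s) 2 μ)
    (W : Matrix (Fin q) (Fin q) ℝ) (a c : Fin p) :
    matExp μ (fun ω => X ω * W * (X ω)ᵀ) a c
      = ∑ t, ∑ s, W s t * ∫ ω, X ω a s * X ω c t ∂μ := by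
  have hint : ∀ s t, Integrable (fun ω => X ω a s * W s t * X ω c t) μ := fun s t => by
    simpa only [mul_right_comm] using ((hX a s).integrable_fun_mul (hX c t)).mul_const (W s t)
  simp only [matExp, of_apply, mul_apply, transpose_apply, Finset.sum_mul]
  rw [integral_finsetSum _ fun t _ => integrable_finsetSum _ fun s _ => hint s t]
  refine sum_congr rfl fun t _ => ?_
  rw [integral_finsetSum _ fun s _ => hint s t]
  refine sum_congr rfl fun s _ => ?_
  rw [← integral_const_mul]
  congr 1 with ω
  ring

lemma matExp_mul_mul_transpose_apply_eq_of_orthogonal (hX : ∀ i s, MemLp (fun ω => X ω i s) 2 μ)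
    (W : Matrix (Fin q) (Fin q) ℝ) {a b c : Fin p}
    (h : ∀ s t, ∫ ω, (X ω a s - X ω b s) * X ω c t ∂μ = 0) :
    matExp μ (fun ω => X ω * W * (X ω)ᵀ) a c = matExp μ (fun ω => X ω * W * (X ω)ᵀ) b c := by
  rw [matExp_mul_mul_transpose_apply hX, matExp_mul_mul_transpose_apply hX]
  refine sum_congr rfl fun t _ => sum_congr rfl fun s _ => ?_
  rw [← sub_eq_zero, ← mul_sub, ← integral_sub ((hX a s).integrable_fun_mul (hX c t))
    ((hX b s).integrable_fun_mul (hX c t))]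
  simp [← sub_mul, h s t]

end SecondMoments

section Model

variable {Ω : Type*} {p q K₁ K₂ : ℕ}
  {A : Matrix (Fin p) (Fin K₁) ℝ} {B : Matrix (Fin q) (Fin K₂) ℝ}
  {Z : Ω → Matrix (Fin K₁) (Fin K₂) ℝ} {Γ X : Ω → Matrix (Fin p) (Fin q) ℝ}

lemma sub_apply_eq_of_sameCluster (hmodel : ∀ ω, X ω = A * Z ω * Bᵀ + Γ ω) (hA : IsMembership A)
    {a b : Fin p} (hab : SameCluster A a b) (ω : Ω) (s : Fin q) :
    X ω a s - X ω b s = Γ ω a s - Γ ω b s := by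
  simp only [hmodel, Matrix.add_apply, mul_apply, hA.row_eq_of_sameCluster hab]
  ring

variable [MeasurableSpace Ω] {μ : Measure Ω}

lemma integral_noise_mul_eq_zero (hmodel : ∀ ω, X ω = A * Z ω * Bᵀ + Γ ω)
    (hZmeas : Measurable Z) (hΓmeas : Measurable Γ) (hΓmean : ∀ a b, ∫ ω, Γ ω a b ∂μ = 0)
    (hΓindep : iIndepFun (fun (ij : Fin p × Fin q) ω => Γ ω ij.1 ij.2) μ)
    (hindep : IndepFun Z Γ μ) (hZ : ∀ j k, MemLp (fun ω => Z ω j k) 2 μ)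
    (hΓ : ∀ i s, MemLp (fun ω => Γ ω i s) 2 μ) {i c : Fin p} (hic : i ≠ c) (s t : Fin q) :
    ∫ ω, Γ ω i s * X ω c t ∂μ = 0 := by
  have hΓent : ∀ i s, Measurable fun ω => Γ ω i s := fun _ _ => hΓmeas.eval.eval
  have hsignal : ∫ ω, Γ ω i s * (A * Z ω * Bᵀ) c t ∂μ = 0 := by
    have hmeas : Measurable fun M : Matrix (Fin K₁) (Fin K₂) ℝ => (A * M * Bᵀ) c t := by
      simp only [mul_apply]
      fun_prop
    refine IndepFun.integral_mul_eq_zero ?_ (hΓent i s).aestronglyMeasurable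
      (hmeas.comp hZmeas).aestronglyMeasurable (hΓmean i s)
    exact (hindep.comp hmeas ((measurable_pi_apply s).comp (measurable_pi_apply i))).symm
  have hnoise : ∫ ω, Γ ω i s * Γ ω c t ∂μ = 0 :=
    (hΓindep.indepFun (i := (i, s)) (j := (c, t)) (by simp [hic])).integral_mul_eq_zero
      (hΓent i s).aestronglyMeasurable (hΓent c t).aestronglyMeasurable (hΓmean i s)
  simp only [hmodel, Matrix.add_apply, mul_add]
  rw [integral_add ((hΓ i s).integrable_fun_mul (memLp_mul_mul_apply hZ A Bᵀ c t))
    ((hΓ i s).integrable_fun_mul (hΓ c t)), hsignal, hnoise, add_zero]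

end Model

theorem cod_identifiability_general
    {Ω : Type} [MeasurableSpace Ω] (μ : Measure Ω)
    {p q K₁ K₂ : ℕ}
    (A : Matrix (Fin p) (Fin K₁) ℝ) (B : Matrix (Fin q) (Fin K₂) ℝ)
    (Z : Ω → Matrix (Fin K₁) (Fin K₂) ℝ) (Γ X : Ω → Matrix (Fin p) (Fin q) ℝ)
    (hA : IsMembership A)
    (hmodel : ∀ ω, X ω = A * Z ω * Bᵀ + Γ ω)
    (hZmeas : Measurable Z) (hΓmeas : Measurable Γ)
    (hΓmean : ∀ a b, ∫ ω, Γ ω a b ∂μ = 0)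
    (hZint : ∀ j k j' k', Integrable (fun ω => Z ω j k * Z ω j' k') μ)
    (hΓint : ∀ a b a' b', Integrable (fun ω => Γ ω a b * Γ ω a' b') μ)
    (hΓindep : iIndepFun
      (fun (ij : Fin p × Fin q) ω => Γ ω ij.1 ij.2) μ)
    (hindep : IndepFun Z Γ μ)
    (W : Matrix (Fin q) (Fin q) ℝ) :
    (∀ a b : Fin p, SameCluster A a b →
        COD (matExp μ (fun ω => X ω * W * (X ω)ᵀ)) a b = 0) ∧
    (0 < MCOD (SameCluster A) (matExp μ (fun ω => X ω * W * (X ω)ᵀ)) →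
      ∀ a b : Fin p, a ≠ b →
        (SameCluster A a b ↔
          COD (matExp μ (fun ω => X ω * W * (X ω)ᵀ)) a b = 0)) := by
  have hZ : ∀ j k, MemLp (fun ω => Z ω j k) 2 μ := fun j k =>
    memLp_two_of_integrable_mul_self hZmeas.eval.eval.aestronglyMeasurable (hZint j k j k)
  have hΓ : ∀ i s, MemLp (fun ω => Γ ω i s) 2 μ := fun i s =>
    memLp_two_of_integrable_mul_self hΓmeas.eval.eval.aestronglyMeasurable (hΓint i s i s)
  have hX : ∀ i s, MemLp (fun ω => X ω i s) 2 μ := fun i s => by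
    simpa only [hmodel, Matrix.add_apply, Pi.add_def] using
      (memLp_mul_mul_apply hZ A Bᵀ i s).add (hΓ i s)
  have horth : ∀ {i c : Fin p}, i ≠ c → ∀ s t, ∫ ω, Γ ω i s * X ω c t ∂μ = 0 :=
    integral_noise_mul_eq_zero hmodel hZmeas hΓmeas hΓmean hΓindep hindep hZ hΓ
  have hwithin : ∀ a b, SameCluster A a b →
      COD (matExp μ (fun ω => X ω * W * (X ω)ᵀ)) a b = 0 := by
    refine fun a b hab => COD_eq_zero_of_forall_apply_eq _ fun c hca hcb =>
      matExp_mul_mul_transpose_apply_eq_of_orthogonal hX W fun s t => ?_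
    simp only [sub_apply_eq_of_sameCluster hmodel hA hab, sub_mul]
    rw [integral_sub ((hΓ a s).integrable_fun_mul (hX c t)) ((hΓ b s).integrable_fun_mul (hX c t)),
      horth hca.symm, horth hcb.symm, sub_zero]
  exact ⟨hwithin, fun hM a b _ => iff_COD_eq_zero_of_MCOD_pos _ hwithin hM a b⟩

/-- Under model (1.1) with `p ≥ 3` and psd `W`: (i) within-cluster
pairs have `COD = 0`; (ii) if `MCOD(Σ_{p,W}) > 0`, then for all `a ≠ b`, `a ∼ b` iff
`COD_{Σ_{p,W}}(a,b) = 0`, so the row partition is identifiable from `Σ_{p,W}`. -/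
theorem cod_identifiability
    {Ω : Type} [MeasurableSpace Ω] (μ : Measure Ω) [IsProbabilityMeasure μ]
    {p q K₁ K₂ : ℕ} (hp : 3 ≤ p)
    (A : Matrix (Fin p) (Fin K₁) ℝ) (B : Matrix (Fin q) (Fin K₂) ℝ)
    (Z : Ω → Matrix (Fin K₁) (Fin K₂) ℝ) (Γ X : Ω → Matrix (Fin p) (Fin q) ℝ)
    (hA : IsMembership A) (hB : IsMembership B)
    (hmodel : ∀ ω, X ω = A * Z ω * Bᵀ + Γ ω)
    (hZmeas : Measurable Z) (hΓmeas : Measurable Γ)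
    (hZmean : ∀ j k, ∫ ω, Z ω j k ∂μ = 0)
    (hΓmean : ∀ a b, ∫ ω, Γ ω a b ∂μ = 0)
    (hZint : ∀ j k j' k', Integrable (fun ω => Z ω j k * Z ω j' k') μ)
    (hΓint : ∀ a b a' b', Integrable (fun ω => Γ ω a b * Γ ω a' b') μ)
    (hZΓint : ∀ j k a b, Integrable (fun ω => Z ω j k * Γ ω a b) μ)
    (hΓindep : iIndepFun
      (fun (ij : Fin p × Fin q) ω => Γ ω ij.1 ij.2) μ)
    (hindep : IndepFun Z Γ μ)
    (W : Matrix (Fin q) (Fin q) ℝ) (hW : W.PosSemidef) :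
    (∀ a b : Fin p, SameCluster A a b →
        COD (matExp μ (fun ω => X ω * W * (X ω)ᵀ)) a b = 0) ∧
    (0 < MCOD (SameCluster A) (matExp μ (fun ω => X ω * W * (X ω)ᵀ)) →
      ∀ a b : Fin p, a ≠ b →
        (SameCluster A a b ↔
          COD (matExp μ (fun ω => X ω * W * (X ω)ᵀ)) a b = 0)) :=
  cod_identifiability_general μ A B Z Γ X hA hmodel hZmeas hΓmeas hΓmean hZint hΓint hΓindep hindep
    W
end
end

section
/- Let p ≥ 3, let G be a partition of {1,…,p}, and let Σ, Σ̂ be p×p real matrices such that COD_Σ(a,b) = 0 whenever a ∼ b. Let δ ≥ ‖Σ̂ − Σ‖_max. Then: (i) for all a ∼ b, COD_{Σ̂}(a,b) ≤ 2δ; (ii) for all a ≁ b, COD_{Σ̂}(a,b) ≥ MCOD(Σ) − 2δ. In particular, if MCOD(Σ) > 4δ, then thresholding at α = 2δ exactly recovers the partition: a ∼ b if and only if COD_{Σ̂}(a,b) ≤ α, for all a ≠ b. -/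
/-! The proof is the triangle inequality: each entry of `Σ̂` is within `δ` of the corresponding
entry of `Σ`, so every difference `Σ̂_{ac} − Σ̂_{bc}` is within `2δ` of `Σ_{ac} − Σ_{bc}`, and
`COD` is `2δ`-Lipschitz in the matrix. Within-cluster pairs thus have `COD_{Σ̂} ≤ 0 + 2δ`,
between-cluster pairs have `COD_{Σ̂} ≥ MCOD(Σ) − 2δ`, and when `MCOD(Σ) > 4δ` these two ranges
are separated by the threshold `2δ`. -/

open Matrix BigOperators

noncomputable section

section MaxNorm

variable {p q : ℕ}

lemma maxNorm_nonneg (M : Matrix (Fin p) (Fin q) ℝ) : 0 ≤ maxNorm M :=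
  Real.iSup_nonneg fun _ => Real.iSup_nonneg fun _ => abs_nonneg _

lemma abs_le_maxNorm (M : Matrix (Fin p) (Fin q) ℝ) (i : Fin p) (j : Fin q) :
    |M i j| ≤ maxNorm M :=
  (le_ciSup (Set.finite_range _).bddAbove j).trans
    (le_ciSup (Set.finite_range fun i => ⨆ j, |M i j|).bddAbove i)

lemma maxNorm_sub_comm (M N : Matrix (Fin p) (Fin q) ℝ) : maxNorm (M - N) = maxNorm (N - M) := by
  simp only [maxNorm, Matrix.sub_apply, abs_sub_comm]

end MaxNorm

section COD

variable {p : ℕ}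

lemma cod_nonneg (S : Matrix (Fin p) (Fin p) ℝ) (a b : Fin p) : 0 ≤ COD S a b :=
  Real.iSup_nonneg fun _ => Real.iSup_nonneg fun _ => abs_nonneg _

lemma abs_sub_le_cod (S : Matrix (Fin p) (Fin p) ℝ) {a b c : Fin p} (h : c ≠ a ∧ c ≠ b) :
    |S a c - S b c| ≤ COD S a b := by
  rw [COD, ← ciSup_pos (f := fun _ => |S a c - S b c|) h]
  exact le_ciSup (f := fun c => ⨆ _ : c ≠ a ∧ c ≠ b, |S a c - S b c|)
    (Set.finite_range _).bddAbove c

lemma cod_le_cod_add_two_mul_maxNorm (S T : Matrix (Fin p) (Fin p) ℝ) (a b : Fin p) :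
    COD T a b ≤ COD S a b + 2 * maxNorm (T - S) := by
  have hbound : 0 ≤ COD S a b + 2 * maxNorm (T - S) := by
    have := cod_nonneg S a b
    have := maxNorm_nonneg (T - S)
    positivity
  refine Real.iSup_le (fun c => Real.iSup_le (fun hc => ?_) hbound) hbound
  have hS := abs_sub_le_cod S hc
  have ha := abs_le_maxNorm (T - S) a c
  have hb := abs_le_maxNorm (T - S) b c
  rw [Matrix.sub_apply] at ha hb
  rw [abs_le] at *
  constructor <;> linarith

lemma abs_cod_sub_cod_le (S T : Matrix (Fin p) (Fin p) ℝ) (a b : Fin p) :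
    |COD T a b - COD S a b| ≤ 2 * maxNorm (T - S) := by
  have hTS := cod_le_cod_add_two_mul_maxNorm S T a b
  have hST := cod_le_cod_add_two_mul_maxNorm T S a b
  rw [maxNorm_sub_comm] at hST
  rw [abs_le]
  constructor <;> linarith

lemma mcod_le_cod (r : Fin p → Fin p → Prop) (S : Matrix (Fin p) (Fin p) ℝ) {a b : Fin p}
    (hab : ¬ r a b) : MCOD r S ≤ COD S a b :=
  ciInf_le ⟨0, by rintro _ ⟨_, rfl⟩; exact cod_nonneg _ _ _⟩ (⟨(a, b), hab⟩ : {ab // ¬ r ab.1 ab.2})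

end COD

theorem cod_threshold_recovery_general
    {p : ℕ} (G : Setoid (Fin p)) (S Shat : Matrix (Fin p) (Fin p) ℝ)
    (hzero : ∀ a b : Fin p, G.r a b → COD S a b = 0)
    (δ : ℝ) (hδ : maxNorm (Shat - S) ≤ δ) :
    (∀ a b : Fin p, G.r a b → COD Shat a b ≤ 2 * δ) ∧
    (∀ a b : Fin p, ¬ G.r a b →
        MCOD (fun x y => G.r x y) S - 2 * δ ≤ COD Shat a b) ∧
    (4 * δ < MCOD (fun x y => G.r x y) S →
        ∀ a b : Fin p, a ≠ b → (G.r a b ↔ COD Shat a b ≤ 2 * δ)) := by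
  have hclose : ∀ a b, |COD Shat a b - COD S a b| ≤ 2 * δ := fun a b =>
    (abs_cod_sub_cod_le S Shat a b).trans (by linarith)
  have within : ∀ a b, G.r a b → COD Shat a b ≤ 2 * δ := fun a b hab => by
    have := (abs_le.mp (hclose a b)).2
    linarith [hzero a b hab]
  have between : ∀ a b, ¬ G.r a b → MCOD (fun x y => G.r x y) S - 2 * δ ≤ COD Shat a b :=
    fun a b hab => by
      have := (abs_le.mp (hclose a b)).1
      linarith [mcod_le_cod (fun x y => G.r x y) S hab]
  refine ⟨within, between, fun hsep a b _ => ⟨within a b, fun hle => ?_⟩⟩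
  by_contra hab
  linarith [between a b hab]

/-- Exact cluster recovery by thresholding the empirical COD:
if `COD_Σ` vanishes on within-cluster pairs and `δ ≥ ‖Σ̂ − Σ‖_max`, then
(i) within-cluster pairs have `COD_{Σ̂} ≤ 2δ`; (ii) between-cluster pairs have
`COD_{Σ̂} ≥ MCOD(Σ) − 2δ`; and (iii) if `MCOD(Σ) > 4δ`, thresholding at `α = 2δ`
exactly recovers the partition. -/
theorem cod_threshold_recovery
    {p : ℕ} (hp : 3 ≤ p) (G : Setoid (Fin p)) (S Shat : Matrix (Fin p) (Fin p) ℝ)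
    (hzero : ∀ a b : Fin p, G.r a b → COD S a b = 0)
    (δ : ℝ) (hδ : maxNorm (Shat - S) ≤ δ) :
    (∀ a b : Fin p, G.r a b → COD Shat a b ≤ 2 * δ) ∧
    (∀ a b : Fin p, ¬ G.r a b →
        MCOD (fun x y => G.r x y) S - 2 * δ ≤ COD Shat a b) ∧
    (4 * δ < MCOD (fun x y => G.r x y) S →
        ∀ a b : Fin p, a ≠ b → (G.r a b ↔ COD Shat a b ≤ 2 * δ)) :=
  cod_threshold_recovery_general G S Shat hzero δ hδ
end
end

section
/- Assume model (1.1), and let B̄ ∈ {0,1}^{q×s} be an arbitrary membership matrix with all s clusters nonempty. With W̄ = B̄ (B̄ᵀ B̄)^{-2} B̄ᵀ / s and G = Bᵀ B̄ (B̄ᵀ B̄)^{-1}, the weighted covariance matrix satisfies Σ_{p,W̄} = E(X W̄ Xᵀ) = (1/s) · A E(Z G Gᵀ Zᵀ) Aᵀ + E(Γ W̄ Γᵀ), and E(Γ W̄ Γᵀ) is diagonal. -/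
open MeasureTheory ProbabilityTheory Matrix BigOperators Finset
open scoped Classical

noncomputable section

/-! Expanding `X W Xᵀ` with `X = A Z Bᵀ + Γ` gives four terms. The two cross terms are centred,
since every entry of `Z` is independent of every entry of `Γ` and both are centred. The signal term
is `A (Z (Bᵀ W B) Zᵀ) Aᵀ`, and `Bᵀ W̄ B = G Gᵀ / s` because `B̄ᵀ B̄` is symmetric. Finally,
entry `(a, b)` of `E(Γ W Γᵀ)` is a combination of the moments `E(Γ_ac Γ_bx)`, which vanish for
`a ≠ b` by independence of distinct noise entries. -/

section MatExp

variable {Ω : Type*} [MeasurableSpace Ω] {μ : Measure Ω} {m n k : ℕ}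

def EntrywiseIntegrable (μ : Measure Ω) (F : Ω → Matrix (Fin m) (Fin n) ℝ) : Prop :=
  ∀ i j, Integrable (fun ω => F ω i j) μ

namespace EntrywiseIntegrable

variable {F G : Ω → Matrix (Fin m) (Fin n) ℝ}

lemma add (hF : EntrywiseIntegrable μ F) (hG : EntrywiseIntegrable μ G) :
    EntrywiseIntegrable μ (fun ω => F ω + G ω) :=
  fun i j => (hF i j).add (hG i j)

lemma mul_left (C : Matrix (Fin k) (Fin m) ℝ) (hF : EntrywiseIntegrable μ F) :
    EntrywiseIntegrable μ (fun ω => C * F ω) := fun i j => by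
  simpa only [mul_apply] using integrable_finsetSum _ fun l _ => (hF l j).const_mul (C i l)

lemma mul_right (D : Matrix (Fin n) (Fin k) ℝ) (hF : EntrywiseIntegrable μ F) :
    EntrywiseIntegrable μ (fun ω => F ω * D) := fun i j => by
  simpa only [mul_apply] using integrable_finsetSum _ fun l _ => (hF i l).mul_const (D l j)

end EntrywiseIntegrable

lemma matExp_add {F G : Ω → Matrix (Fin m) (Fin n) ℝ}
    (hF : EntrywiseIntegrable μ F) (hG : EntrywiseIntegrable μ G) :
    matExp μ (fun ω => F ω + G ω) = matExp μ F + matExp μ G := by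
  ext i j
  exact integral_add (hF i j) (hG i j)

lemma matExp_smul (c : ℝ) (F : Ω → Matrix (Fin m) (Fin n) ℝ) :
    matExp μ (fun ω => c • F ω) = c • matExp μ F := by
  ext i j
  exact integral_const_mul c _

lemma matExp_mul_left (C : Matrix (Fin k) (Fin m) ℝ) {F : Ω → Matrix (Fin m) (Fin n) ℝ}
    (hF : EntrywiseIntegrable μ F) :
    matExp μ (fun ω => C * F ω) = C * matExp μ F := by
  ext i j
  simp only [matExp, of_apply, mul_apply]
  rw [integral_finsetSum _ fun l _ => (hF l j).const_mul _]
  simp only [integral_const_mul]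

lemma matExp_mul_right (D : Matrix (Fin n) (Fin k) ℝ) {F : Ω → Matrix (Fin m) (Fin n) ℝ}
    (hF : EntrywiseIntegrable μ F) :
    matExp μ (fun ω => F ω * D) = matExp μ F * D := by
  ext i j
  simp only [matExp, of_apply, mul_apply]
  rw [integral_finsetSum _ fun l _ => (hF i l).mul_const _]
  simp only [integral_mul_const]

lemma mul_mul_transpose_apply {n' : ℕ} (P : Matrix (Fin m) (Fin n) ℝ)
    (W : Matrix (Fin n) (Fin n') ℝ) (Q : Matrix (Fin k) (Fin n') ℝ) (i : Fin m) (j : Fin k) :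
    (P * W * Qᵀ) i j = ∑ d, ∑ c, W c d * (P i c * Q j d) := by
  simp only [mul_apply, transpose_apply, Finset.sum_mul]
  exact Finset.sum_congr rfl fun d _ => Finset.sum_congr rfl fun c _ => by ring

variable {n' : ℕ} {P : Ω → Matrix (Fin m) (Fin n) ℝ} {Q : Ω → Matrix (Fin k) (Fin n') ℝ}

lemma entrywiseIntegrable_mul_mul_transpose (W : Matrix (Fin n) (Fin n') ℝ)
    (hPQ : ∀ i c j d, Integrable (fun ω => P ω i c * Q ω j d) μ) :
    EntrywiseIntegrable μ (fun ω => P ω * W * (Q ω)ᵀ) := fun i j => by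
  simp only [mul_mul_transpose_apply]
  exact integrable_finsetSum _ fun d _ =>
    integrable_finsetSum _ fun c _ => (hPQ i c j d).const_mul _

lemma matExp_mul_mul_transpose_apply_s18 (W : Matrix (Fin n) (Fin n') ℝ)
    (hPQ : ∀ i c j d, Integrable (fun ω => P ω i c * Q ω j d) μ) (i : Fin m) (j : Fin k) :
    matExp μ (fun ω => P ω * W * (Q ω)ᵀ) i j
      = ∑ d, ∑ c, W c d * ∫ ω, P ω i c * Q ω j d ∂μ := by
  simp only [matExp, of_apply, mul_mul_transpose_apply]
  rw [integral_finsetSum _ fun d _ =>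
    integrable_finsetSum _ fun c _ => (hPQ i c j d).const_mul _]
  refine Finset.sum_congr rfl fun d _ => ?_
  rw [integral_finsetSum _ fun c _ => (hPQ i c j d).const_mul _]
  simp only [integral_const_mul]

lemma matExp_mul_mul_transpose_eq_zero (W : Matrix (Fin n) (Fin n') ℝ)
    (hPQ : ∀ i c j d, Integrable (fun ω => P ω i c * Q ω j d) μ)
    (horth : ∀ i c j d, ∫ ω, P ω i c * Q ω j d ∂μ = 0) :
    matExp μ (fun ω => P ω * W * (Q ω)ᵀ) = 0 := by
  ext i j
  simp [matExp_mul_mul_transpose_apply_s18 W hPQ, horth]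

lemma isDiag_matExp_mul_mul_transpose (W : Matrix (Fin n) (Fin n) ℝ)
    (hP : ∀ i c j d, Integrable (fun ω => P ω i c * P ω j d) μ)
    (horth : ∀ i j, i ≠ j → ∀ c d, ∫ ω, P ω i c * P ω j d ∂μ = 0) :
    (matExp μ (fun ω => P ω * W * (P ω)ᵀ)).IsDiag := fun i j hij => by
  simp [matExp_mul_mul_transpose_apply_s18 W hP, horth i j hij]

end MatExp

lemma transpose_mul_gram_inv_sq_mul {R : Type*} [CommRing R] {q K s : Type*}
    [Fintype q] [Fintype s] [DecidableEq s] (B : Matrix q K R) (C : Matrix q s R) :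
    Bᵀ * (C * ((Cᵀ * C) ^ 2)⁻¹ * Cᵀ) * B
      = (Bᵀ * C * (Cᵀ * C)⁻¹) * (Bᵀ * C * (Cᵀ * C)⁻¹)ᵀ := by
  rw [sq, Matrix.mul_inv_rev]
  simp only [transpose_mul, transpose_nonsing_inv, transpose_transpose,
    Matrix.mul_assoc]

lemma integral_mul_eq_zero_of_indepFun {Ω : Type*} [MeasurableSpace Ω] {μ : Measure Ω}
    {f g : Ω → ℝ} (hfg : IndepFun f g μ) (hf : Measurable f) (hg : Measurable g)
    (hf₀ : ∫ ω, f ω ∂μ = 0) : ∫ ω, f ω * g ω ∂μ = 0 := by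
  rw [hfg.integral_fun_mul_eq_mul_integral hf.aestronglyMeasurable hg.aestronglyMeasurable,
    hf₀, zero_mul]

lemma measurable_matrix_apply {m n : Type*} (i : m) (j : n) :
    Measurable fun M : Matrix m n ℝ => M i j :=
  (measurable_pi_apply i).eval

theorem matExp_signal_add_noise_quadForm {Ω : Type*} [MeasurableSpace Ω] {μ : Measure Ω}
    {p q K₁ K₂ : ℕ} (A : Matrix (Fin p) (Fin K₁) ℝ) (B : Matrix (Fin q) (Fin K₂) ℝ)
    (W : Matrix (Fin q) (Fin q) ℝ)
    {Z : Ω → Matrix (Fin K₁) (Fin K₂) ℝ} {Γ X : Ω → Matrix (Fin p) (Fin q) ℝ}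
    (hX : ∀ ω, X ω = A * Z ω * Bᵀ + Γ ω)
    (hZint : ∀ j k j' k', Integrable (fun ω => Z ω j k * Z ω j' k') μ)
    (hΓint : ∀ a b a' b', Integrable (fun ω => Γ ω a b * Γ ω a' b') μ)
    (hZΓint : ∀ j k a b, Integrable (fun ω => Z ω j k * Γ ω a b) μ)
    (hZΓ : ∀ j k a b, ∫ ω, Z ω j k * Γ ω a b ∂μ = 0) :
    matExp μ (fun ω => X ω * W * (X ω)ᵀ)
      = A * matExp μ (fun ω => Z ω * (Bᵀ * W * B) * (Z ω)ᵀ) * Aᵀ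
        + matExp μ (fun ω => Γ ω * W * (Γ ω)ᵀ) := by
  have hΓZint : ∀ a b j k, Integrable (fun ω => Γ ω a b * Z ω j k) μ := fun a b j k => by
    simpa only [mul_comm] using hZΓint j k a b
  have hΓZ : ∀ a b j k, ∫ ω, Γ ω a b * Z ω j k ∂μ = 0 := fun a b j k => by
    simpa only [mul_comm] using hZΓ j k a b
  have hexpand : ∀ ω, X ω * W * (X ω)ᵀ
      = A * (Z ω * (Bᵀ * W * B) * (Z ω)ᵀ) * Aᵀ + A * (Z ω * (Bᵀ * W) * (Γ ω)ᵀ)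
        + Γ ω * (W * B) * (Z ω)ᵀ * Aᵀ + Γ ω * W * (Γ ω)ᵀ := fun ω => by
    simp only [hX, transpose_add, transpose_mul, transpose_transpose, Matrix.add_mul,
      Matrix.mul_add, Matrix.mul_assoc]
    abel
  have hZZ := entrywiseIntegrable_mul_mul_transpose (Bᵀ * W * B) hZint
  have hcross₁Int := (entrywiseIntegrable_mul_mul_transpose (Bᵀ * W) hZΓint).mul_left A
  have hcross₂Int := (entrywiseIntegrable_mul_mul_transpose (W * B) hΓZint).mul_right Aᵀ
  have hΓΓ := entrywiseIntegrable_mul_mul_transpose W hΓint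
  have hsignal : matExp μ (fun ω => A * (Z ω * (Bᵀ * W * B) * (Z ω)ᵀ) * Aᵀ)
      = A * matExp μ (fun ω => Z ω * (Bᵀ * W * B) * (Z ω)ᵀ) * Aᵀ := by
    rw [matExp_mul_right _ (hZZ.mul_left A), matExp_mul_left _ hZZ]
  have hcross₁ : matExp μ (fun ω => A * (Z ω * (Bᵀ * W) * (Γ ω)ᵀ)) = 0 := by
    rw [matExp_mul_left _ (entrywiseIntegrable_mul_mul_transpose _ hZΓint),
      matExp_mul_mul_transpose_eq_zero _ hZΓint hZΓ, Matrix.mul_zero]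
  have hcross₂ : matExp μ (fun ω => Γ ω * (W * B) * (Z ω)ᵀ * Aᵀ) = 0 := by
    rw [matExp_mul_right _ (entrywiseIntegrable_mul_mul_transpose _ hΓZint),
      matExp_mul_mul_transpose_eq_zero _ hΓZint hΓZ, Matrix.zero_mul]
  have hsignalInt := (hZZ.mul_left A).mul_right Aᵀ
  simp_rw [hexpand]
  rw [matExp_add ((hsignalInt.add hcross₁Int).add hcross₂Int) hΓΓ,
    matExp_add (hsignalInt.add hcross₁Int) hcross₂Int, matExp_add hsignalInt hcross₁Int,
    hsignal, hcross₁, hcross₂, add_zero, add_zero]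

theorem general_weight_decomposition_general
    {Ω : Type} [MeasurableSpace Ω] (μ : Measure Ω)
    {p q K₁ K₂ s : ℕ}
    (A : Matrix (Fin p) (Fin K₁) ℝ) (B : Matrix (Fin q) (Fin K₂) ℝ)
    (Bbar : Matrix (Fin q) (Fin s) ℝ)
    (Z : Ω → Matrix (Fin K₁) (Fin K₂) ℝ) (Γ X : Ω → Matrix (Fin p) (Fin q) ℝ)
    (hmodel : ∀ ω, X ω = A * Z ω * Bᵀ + Γ ω)
    (hZmeas : Measurable Z) (hΓmeas : Measurable Γ)
    (hZmean : ∀ j k, ∫ ω, Z ω j k ∂μ = 0)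
    (hΓmean : ∀ a b, ∫ ω, Γ ω a b ∂μ = 0)
    (hZint : ∀ j k j' k', Integrable (fun ω => Z ω j k * Z ω j' k') μ)
    (hΓint : ∀ a b a' b', Integrable (fun ω => Γ ω a b * Γ ω a' b') μ)
    (hZΓint : ∀ j k a b, Integrable (fun ω => Z ω j k * Γ ω a b) μ)
    (hΓindep : iIndepFun
      (fun (ij : Fin p × Fin q) ω => Γ ω ij.1 ij.2) μ)
    (hindep : IndepFun Z Γ μ) :
    matExp μ (fun ω =>
        X ω * ((1/(s:ℝ)) • (Bbar * ((Bbarᵀ * Bbar)^2)⁻¹ * Bbarᵀ)) * (X ω)ᵀ)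
      = (1/(s:ℝ)) •
          (A * matExp μ (fun ω =>
              Z ω * (Bᵀ * Bbar * (Bbarᵀ * Bbar)⁻¹)
                * (Bᵀ * Bbar * (Bbarᵀ * Bbar)⁻¹)ᵀ * (Z ω)ᵀ) * Aᵀ)
        + matExp μ (fun ω =>
            Γ ω * ((1/(s:ℝ)) • (Bbar * ((Bbarᵀ * Bbar)^2)⁻¹ * Bbarᵀ)) * (Γ ω)ᵀ) ∧
    (matExp μ (fun ω =>
        Γ ω * ((1/(s:ℝ)) • (Bbar * ((Bbarᵀ * Bbar)^2)⁻¹ * Bbarᵀ)) * (Γ ω)ᵀ)).IsDiag := by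
  have hZentry (j k) : Measurable fun ω => Z ω j k := (measurable_matrix_apply j k).comp hZmeas
  have hΓentry (a b) : Measurable fun ω => Γ ω a b := (measurable_matrix_apply a b).comp hΓmeas
  have hZΓ (j k a b) : ∫ ω, Z ω j k * Γ ω a b ∂μ = 0 :=
    integral_mul_eq_zero_of_indepFun
      (hindep.comp (measurable_matrix_apply j k) (measurable_matrix_apply a b))
      (hZentry j k) (hΓentry a b) (hZmean j k)
  have hΓΓ (a b) (hab : a ≠ b) (c x) : ∫ ω, Γ ω a c * Γ ω b x ∂μ = 0 :=
    integral_mul_eq_zero_of_indepFun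
      (hΓindep.indepFun (i := (a, c)) (j := (b, x)) fun h => hab (congrArg Prod.fst h))
      (hΓentry a c) (hΓentry b x) (hΓmean a c)
  refine ⟨?_, isDiag_matExp_mul_mul_transpose _ hΓint hΓΓ⟩
  rw [matExp_signal_add_noise_quadForm A B _ hmodel hZint hΓint hZΓint hZΓ, Matrix.mul_smul,
    Matrix.smul_mul, transpose_mul_gram_inv_sq_mul]
  simp_rw [Matrix.mul_smul, Matrix.smul_mul, ← Matrix.mul_assoc]
  rw [matExp_smul, Matrix.mul_smul, Matrix.smul_mul]

/-- Under model (1.1), for an arbitrary membership matrix `B̄` with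
weight `W̄ = B̄(B̄ᵀB̄)^{-2}B̄ᵀ/s` and `G = Bᵀ B̄ (B̄ᵀB̄)^{-1}`,
`Σ_{p,W̄} = (1/s) A E(Z G Gᵀ Zᵀ) Aᵀ + E(Γ W̄ Γᵀ)`, and `E(Γ W̄ Γᵀ)` is diagonal. -/
theorem general_weight_decomposition
    {Ω : Type} [MeasurableSpace Ω] (μ : Measure Ω) [IsProbabilityMeasure μ]
    {p q K₁ K₂ s : ℕ}
    (A : Matrix (Fin p) (Fin K₁) ℝ) (B : Matrix (Fin q) (Fin K₂) ℝ)
    (Bbar : Matrix (Fin q) (Fin s) ℝ)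
    (Z : Ω → Matrix (Fin K₁) (Fin K₂) ℝ) (Γ X : Ω → Matrix (Fin p) (Fin q) ℝ)
    (hA : IsMembership A) (hB : IsMembership B) (hBbar : IsMembership Bbar)
    (hmodel : ∀ ω, X ω = A * Z ω * Bᵀ + Γ ω)
    (hZmeas : Measurable Z) (hΓmeas : Measurable Γ)
    (hZmean : ∀ j k, ∫ ω, Z ω j k ∂μ = 0)
    (hΓmean : ∀ a b, ∫ ω, Γ ω a b ∂μ = 0)
    (hZint : ∀ j k j' k', Integrable (fun ω => Z ω j k * Z ω j' k') μ)
    (hΓint : ∀ a b a' b', Integrable (fun ω => Γ ω a b * Γ ω a' b') μ)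
    (hZΓint : ∀ j k a b, Integrable (fun ω => Z ω j k * Γ ω a b) μ)
    (hΓindep : iIndepFun
      (fun (ij : Fin p × Fin q) ω => Γ ω ij.1 ij.2) μ)
    (hindep : IndepFun Z Γ μ) :
    matExp μ (fun ω =>
        X ω * ((1/(s:ℝ)) • (Bbar * ((Bbarᵀ * Bbar)^2)⁻¹ * Bbarᵀ)) * (X ω)ᵀ)
      = (1/(s:ℝ)) •
          (A * matExp μ (fun ω =>
              Z ω * (Bᵀ * Bbar * (Bbarᵀ * Bbar)⁻¹)
                * (Bᵀ * Bbar * (Bbarᵀ * Bbar)⁻¹)ᵀ * (Z ω)ᵀ) * Aᵀ)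
        + matExp μ (fun ω =>
            Γ ω * ((1/(s:ℝ)) • (Bbar * ((Bbarᵀ * Bbar)^2)⁻¹ * Bbarᵀ)) * (Γ ω)ᵀ) ∧
    (matExp μ (fun ω =>
        Γ ω * ((1/(s:ℝ)) • (Bbar * ((Bbarᵀ * Bbar)^2)⁻¹ * Bbarᵀ)) * (Γ ω)ᵀ)).IsDiag :=
  general_weight_decomposition_general μ A B Bbar Z Γ X hmodel hZmeas hΓmeas hZmean hΓmean hZint
    hΓint hZΓint hΓindep hindep
end
end
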